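/- For every integer t ≥ 2, (min over 2-colorings c of Z_{37t} of M_5(37t, c)) ≤ 36·t² + (min over 2-colorings c' of Z_t of M_5(t, c')). Equivalently, m_5(Z_{37t}) ≤ (36 + m_5(Z_t))/37², where m_5(Z_n) = (min_c M_5(n,c))/n². -/

import Mathlib

/-- Number of monochromatic `k`-APs in `Z_n` under the 2-coloring `c`:
pairs `(a,d)` with `c a = c (a+d) = ⋯ = c (a+(k-1)d)`. -/
noncomputable def monoAPCount (n k : ℕ) (c : ZMod n → Fin 2) : ℕ :=
  Set.ncard {p : ZMod n × ZMod n | ∀ i < k, c (p.1 + i • p.2) = c p.1}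

/-- The minimum of `monoAPCount n k c` over all 2-colorings `c` of `Z_n`. -/
noncomputable def minMonoAPCount (n k : ℕ) : ℕ :=
  sInf {m : ℕ | ∃ c : ZMod n → Fin 2, monoAPCount n k c = m}

/-!
Blow-up construction. Given a colouring `c` of `Z_t`, colour `x ∈ Z_{mt}` by `χ (x mod m)` when
`m ∤ x` and by `c (x / m)` when `m ∣ x`. If every nondegenerate `k`-AP of `Z_m` has two nonzero
terms of different `χ`-colours, a monochromatic `k`-AP `(a, d)` of `Z_{mt}` has `m ∣ d`. Then
either `m ∤ a`, leaving at most `(m - 1)t · t` such pairs, or `(a, d) = (m a', m d')` with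
`(a', d')` monochromatic for `c`. For `m = 37` and `k = 5` the quadratic-residue colouring of
`Z_37` has the required property, which is checked by computation.
-/

lemma minMonoAPCount_le_monoAPCount {n k : ℕ} (c : ZMod n → Fin 2) :
    minMonoAPCount n k ≤ monoAPCount n k c :=
  Nat.sInf_le ⟨c, rfl⟩

lemma exists_monoAPCount_eq_minMonoAPCount (n k : ℕ) :
    ∃ c : ZMod n → Fin 2, monoAPCount n k c = minMonoAPCount n k :=
  Nat.sInf_mem (s := {m | ∃ c : ZMod n → Fin 2, monoAPCount n k c = m}) ⟨_, fun _ => 0, rfl⟩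

/-- Zero is excluded because the blow-up recolours the multiples of `m`. -/
def BreaksNondegenerateAPs {m : ℕ} (k : ℕ) (χ : ZMod m → Fin 2) : Prop :=
  ∀ a d : ZMod m, d ≠ 0 → ∃ i < k, ∃ j < k,
    a + i • d ≠ 0 ∧ a + j • d ≠ 0 ∧ χ (a + i • d) ≠ χ (a + j • d)

namespace BlowUp

variable {m t : ℕ}

def proj (m t : ℕ) : ZMod (m * t) →+* ZMod m := ZMod.castHom (dvd_mul_right m t) (ZMod m)

def scale (m t : ℕ) : ZMod t →+ ZMod (m * t) :=
  ZMod.lift t ⟨(AddMonoidHom.mulLeft (m : ZMod (m * t))).comp (Int.castAddHom _), by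
    change (m : ZMod (m * t)) * ((t : ℤ) : ZMod (m * t)) = 0
    exact_mod_cast ZMod.natCast_self (m * t)⟩

def descale (m t : ℕ) (x : ZMod (m * t)) : ZMod t := (x.val / m : ℕ)

def blowUp (χ : ZMod m → Fin 2) (c : ZMod t → Fin 2) (x : ZMod (m * t)) : Fin 2 :=
  if proj m t x = 0 then c (descale m t x) else χ (proj m t x)

lemma scale_natCast (u : ℕ) : scale m t u = ((m * u : ℕ) : ZMod (m * t)) := by
  rw [← Int.cast_natCast u, scale, ZMod.lift_coe]
  simp

lemma proj_natCast (u : ℕ) : proj m t u = u := map_natCast _ u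

variable {k : ℕ} {χ : ZMod m → Fin 2} {c : ZMod t → Fin 2}

lemma proj_eq_zero_of_mono (hχ : BreaksNondegenerateAPs k χ) {a d : ZMod (m * t)}
    (hmono : ∀ i < k, blowUp χ c (a + i • d) = blowUp χ c a) : proj m t d = 0 := by
  by_contra hd
  obtain ⟨i, hi, j, hj, hi0, hj0, hne⟩ := hχ (proj m t a) (proj m t d) hd
  have hterm : ∀ l : ℕ, proj m t a + l • proj m t d ≠ 0 →
      χ (proj m t a + l • proj m t d) = blowUp χ c (a + l • d) := by
    intro l hl
    rw [← map_nsmul, ← map_add] at hl ⊢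
    exact (if_neg hl).symm
  rw [hterm i hi0, hterm j hj0, hmono i hi, hmono j hj] at hne
  exact hne rfl

variable [NeZero t]

lemma proj_scale (y : ZMod t) : proj m t (scale m t y) = 0 := by
  rw [← ZMod.natCast_zmod_val y, scale_natCast, proj_natCast, Nat.cast_mul, ZMod.natCast_self,
    zero_mul]

variable [NeZero m]

lemma val_scale (y : ZMod t) : (scale m t y).val = m * y.val := by
  conv_lhs => rw [← ZMod.natCast_zmod_val y]
  rw [scale_natCast, ZMod.val_natCast, Nat.mod_eq_of_lt]
  exact Nat.mul_lt_mul_of_pos_left y.val_lt (NeZero.pos m)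

lemma descale_scale (y : ZMod t) : descale m t (scale m t y) = y := by
  rw [descale, val_scale, Nat.mul_div_cancel_left _ (NeZero.pos m), ZMod.natCast_zmod_val]

lemma scale_injective : Function.Injective (scale m t) :=
  Function.LeftInverse.injective descale_scale

lemma scale_descale {x : ZMod (m * t)} (hx : proj m t x = 0) :
    scale m t (descale m t x) = x := by
  have hdvd : m ∣ x.val := by
    rwa [← ZMod.natCast_zmod_val x, proj_natCast, ZMod.natCast_eq_zero_iff] at hx
  rw [descale, scale_natCast, Nat.mul_div_cancel' hdvd, ZMod.natCast_zmod_val]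

lemma range_scale : Set.range (scale m t) = {x | proj m t x = 0} := by
  ext x
  exact ⟨by rintro ⟨y, rfl⟩; exact proj_scale y, fun hx => ⟨_, scale_descale hx⟩⟩

lemma ncard_proj_eq_zero : {x : ZMod (m * t) | proj m t x = 0}.ncard = t := by
  rw [← range_scale, Set.ncard_range_of_injective scale_injective, Nat.card_zmod]

lemma ncard_proj_ne_zero : {x : ZMod (m * t) | proj m t x = 0}ᶜ.ncard = (m - 1) * t := by
  have := Set.ncard_add_ncard_compl {x : ZMod (m * t) | proj m t x = 0}
  rw [ncard_proj_eq_zero, Nat.card_zmod] at this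
  rw [Nat.sub_mul, one_mul]
  omega

lemma blowUp_scale (y : ZMod t) : blowUp χ c (scale m t y) = c y := by
  rw [blowUp, if_pos (proj_scale y), descale_scale]

theorem monoAPCount_blowUp_le (hχ : BreaksNondegenerateAPs k χ) (c : ZMod t → Fin 2) :
    monoAPCount (m * t) k (blowUp χ c) ≤ (m - 1) * t ^ 2 + monoAPCount t k c := by
  set K := {x : ZMod (m * t) | proj m t x = 0}
  set T := {p : ZMod t × ZMod t | ∀ i < k, c (p.1 + i • p.2) = c p.1}
  have hsub : {p : ZMod (m * t) × ZMod (m * t) |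
      ∀ i < k, blowUp χ c (p.1 + i • p.2) = blowUp χ c p.1}
      ⊆ Kᶜ ×ˢ K ∪ Prod.map (scale m t) (scale m t) '' T := by
    rintro ⟨a, d⟩ hmono
    have hd : proj m t d = 0 := proj_eq_zero_of_mono hχ hmono
    by_cases ha : proj m t a = 0
    · refine Or.inr ⟨(descale m t a, descale m t d), fun i hi => ?_, ?_⟩
      · have := hmono i hi
        rwa [← scale_descale ha, ← scale_descale hd, ← map_nsmul, ← map_add, blowUp_scale,
          blowUp_scale] at this
      · simp [scale_descale ha, scale_descale hd]
    · exact Or.inl ⟨ha, hd⟩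
  calc monoAPCount (m * t) k (blowUp χ c)
      ≤ (Kᶜ ×ˢ K ∪ Prod.map (scale m t) (scale m t) '' T).ncard := Set.ncard_le_ncard hsub
    _ ≤ (Kᶜ ×ˢ K).ncard + (Prod.map (scale m t) (scale m t) '' T).ncard :=
      Set.ncard_union_le _ _
    _ ≤ (m - 1) * t * t + monoAPCount t k c := by
      rw [Set.ncard_prod, ncard_proj_ne_zero, ncard_proj_eq_zero]
      exact Nat.add_le_add_left (Set.ncard_image_le (Set.toFinite T)) _
    _ = (m - 1) * t ^ 2 + monoAPCount t k c := by ring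

theorem minMonoAPCount_mul_le (hχ : BreaksNondegenerateAPs k χ) :
    minMonoAPCount (m * t) k ≤ (m - 1) * t ^ 2 + minMonoAPCount t k := by
  obtain ⟨c, hc⟩ := exists_monoAPCount_eq_minMonoAPCount t k
  rw [← hc]
  exact (minMonoAPCount_le_monoAPCount _).trans (monoAPCount_blowUp_le hχ c)

end BlowUp

def quadraticResidueColoring : ZMod 37 → Fin 2 := fun x => if IsSquare x then 0 else 1

lemma isSquare_iff_mem : ∀ x : ZMod 37,
    IsSquare x ↔ x.val ∈ [0, 1, 3, 4, 7, 9, 10, 11, 12, 16, 21, 25, 26, 27, 28, 30, 33, 34, 36] := by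
  decide

set_option maxRecDepth 10000 in
lemma breaksNondegenerateAPs_quadraticResidueColoring :
    BreaksNondegenerateAPs 5 quadraticResidueColoring := by
  have hcol : quadraticResidueColoring = fun x => if x.val ∈
      [0, 1, 3, 4, 7, 9, 10, 11, 12, 16, 21, 25, 26, 27, 28, 30, 33, 34, 36] then 0 else 1 := by
    funext x
    simp only [quadraticResidueColoring, isSquare_iff_mem]
  rw [BreaksNondegenerateAPs, hcol]
  decide

theorem m5_recursive_37 :
    ∀ t : ℕ, 2 ≤ t →
      minMonoAPCount (37 * t) 5 ≤ 36 * t ^ 2 + minMonoAPCount t 5 := by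
  intro t ht
  have : NeZero t := ⟨by omega⟩
  exact BlowUp.minMonoAPCount_mul_le breaksNondegenerateAPs_quadraticResidueColoring
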